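/- arXiv:1811.02251 — 2 statements merged into one kernel-verified Lean document; each statement's English description precedes it below -/
import Mathlib

section
/- Let E^C_{k_x} (resp. G^C_{k_x}) be the generating function for coloured partitions satisfying the Capparelli difference matrix C (rows a:(2,2,2), c:(1,1,2), d:(0,1,2)) whose largest part equals (resp. is at most) k with colour at most x in the order a < c < d at value k. Then for all k ≥ 1: E^C_{k_d} = d q^k (E^C_{k_a} + G^C_{(k-1)_c}), E^C_{k_c} = c q^k G^C_{(k-1)_c}, and E^C_{k_a} = a q^k G^C_{(k-2)_d}. -/
noncomputable section

/-- The q-Pochhammer symbol `(x;q)_n = ∏_{i=0}^{n-1} (1 - x q^i)`. -/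
def qPoch (x q : ℂ) (n : ℕ) : ℂ := ∏ i ∈ Finset.range n, (1 - x * q ^ i)


/-- The Capparelli difference matrix, colours `0 = a`, `1 = c`, `2 = d`. -/
def capMat : Fin 3 → Fin 3 → ℕ := ![![2,2,2],![1,1,2],![0,1,2]]

/-- A coloured partition (written with largest part first) in the Capparelli class `𝒞`:
parts are positive, and a part of colour `x` followed by a part of colour `y` must exceed
it by at least `capMat x y`.  (These gap conditions encode the order
`1_a < 1_c < 1_d < 2_a < ⋯`.) -/
def CapValid (l : List (ℕ × Fin 3)) : Prop :=
  (∀ p ∈ l, 1 ≤ p.1) ∧ l.Chain' (fun p r => r.1 + capMat p.2 r.2 ≤ p.1)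

/-- The weight of a coloured partition. -/
def wt3 (l : List (ℕ × Fin 3)) : ℕ := (l.map Prod.fst).sum

/-- The number of parts of colour `i`. -/
def nc3 (l : List (ℕ × Fin 3)) (i : Fin 3) : ℕ := (l.map Prod.snd).count i

/-- `G^C` bounded by the coloured integer `m_x`: generating function for Capparelli
coloured partitions all of whose parts are at most `m_x` in the order
`1_a < 1_c < 1_d < 2_a < ⋯` (encoded by the rank `3·value + colour`). -/
def GCle (q a c d : ℂ) (m : ℤ) (x : Fin 3) : ℂ :=
  ∑' l : {l : List (ℕ × Fin 3) //
      CapValid l ∧ ∀ p ∈ l, 3 * (p.1 : ℤ) + (p.2 : ℕ) ≤ 3 * m + (x : ℕ)},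
    q ^ wt3 l.1 * a ^ nc3 l.1 0 * c ^ nc3 l.1 1 * d ^ nc3 l.1 2

/-- `E^C_{k_x}`: generating function for Capparelli coloured partitions whose largest
part is exactly `k` with colour `x`. -/
def ECeq (q a c d : ℂ) (m : ℕ) (x : Fin 3) : ℂ :=
  ∑' l : {l : List (ℕ × Fin 3) // CapValid l ∧ l.head? = some (m, x)},
    q ^ wt3 l.1 * a ^ nc3 l.1 0 * c ^ nc3 l.1 1 * d ^ nc3 l.1 2

/-!
Removing the largest part `k_x` of a partition in `𝒞` leaves a partition in `𝒞` whose largest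
part `r_y` obeys the single gap condition `r + C(x, y) ≤ k`, and `k_x` can be put back on top of
any such partition. Each gap condition makes the next part strictly smaller in the order
`1_a < 1_c < 1_d < 2_a < ⋯`, so a bound on the largest part bounds all parts. For `x = c` and
`x = a` the gap condition says exactly `r_y ≤ (k-1)_c`, resp. `r_y ≤ (k-2)_d`; for `x = d` it says
`r_y ≤ (k-1)_c` or `r_y = k_a`, because `C(d, a) = 0`. The two resulting sets of partitions are
disjoint and finite, so the sum over their union splits.
-/

namespace Capparelli

def rank (p : ℕ × Fin 3) : ℤ := 3 * (p.1 : ℤ) + (p.2 : ℕ)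

def weight (q a c d : ℂ) (l : List (ℕ × Fin 3)) : ℂ :=
  q ^ wt3 l * a ^ nc3 l 0 * c ^ nc3 l 1 * d ^ nc3 l 2

def rankLe (B : ℤ) : Set (List (ℕ × Fin 3)) := {l | CapValid l ∧ ∀ p ∈ l, rank p ≤ B}

def headedBy (p : ℕ × Fin 3) : Set (List (ℕ × Fin 3)) := {l | CapValid l ∧ l.head? = some p}

def headSat (P : ℕ × Fin 3 → Prop) : Set (List (ℕ × Fin 3)) :=
  {l | CapValid l ∧ ∀ r ∈ l.head?, P r}

lemma capValid_iff {l : List (ℕ × Fin 3)} :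
    CapValid l ↔ (∀ p ∈ l, 1 ≤ p.1) ∧ l.IsChain (fun p r => r.1 + capMat p.2 r.2 ≤ p.1) :=
  Iff.rfl

lemma CapValid.cons_iff {p : ℕ × Fin 3} {t : List (ℕ × Fin 3)} :
    CapValid (p :: t) ↔ 1 ≤ p.1 ∧ CapValid t ∧ ∀ r ∈ t.head?, r.1 + capMat p.2 r.2 ≤ p.1 := by
  simp only [capValid_iff, List.forall_mem_cons, List.isChain_cons]
  tauto

lemma rank_lt_of_gap {p r : ℕ × Fin 3} (h : r.1 + capMat p.2 r.2 ≤ p.1) : rank r < rank p := by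
  obtain ⟨v, x⟩ := p
  obtain ⟨w, y⟩ := r
  fin_cases x <;> fin_cases y <;> simp [capMat, rank] at h ⊢ <;> omega

lemma CapValid.pairwise_rank_gt {l : List (ℕ × Fin 3)} (h : CapValid l) :
    l.Pairwise (fun p r => rank r < rank p) :=
  List.isChain_iff_pairwise.mp ((capValid_iff.mp h).2.imp fun _ _ => rank_lt_of_gap)

lemma CapValid.forall_rank_le_iff {l : List (ℕ × Fin 3)} (h : CapValid l) (B : ℤ) :
    (∀ p ∈ l, rank p ≤ B) ↔ ∀ p ∈ l.head?, rank p ≤ B := by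
  cases l with
  | nil => simp
  | cons p t =>
    have hlt := (List.pairwise_cons.mp (CapValid.pairwise_rank_gt h)).1
    simp only [List.forall_mem_cons, List.head?_cons, Option.mem_def, Option.some.injEq,
      forall_eq']
    exact ⟨fun hp => hp.1, fun hp => ⟨hp, fun r hr => (hlt r hr).le.trans hp⟩⟩

lemma rankLe_eq_headSat (B : ℤ) : rankLe B = headSat (rank · ≤ B) := by
  ext l
  exact and_congr_right fun h => CapValid.forall_rank_le_iff h B

lemma headSat_congr {P Q : ℕ × Fin 3 → Prop} (h : ∀ r, P r ↔ Q r) : headSat P = headSat Q :=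
  congrArg headSat (funext fun r => propext (h r))

lemma headSat_or (p : ℕ × Fin 3) (Q : ℕ × Fin 3 → Prop) :
    headSat (fun r => r = p ∨ Q r) = headedBy p ∪ headSat Q := by
  ext l
  cases l with
  | nil => simp [headSat, headedBy]
  | cons r t =>
    simp only [headSat, headedBy, Set.mem_union, Set.mem_ofPred_eq, List.head?_cons,
      Option.mem_def, Option.some.injEq, forall_eq', ← and_or_left]

lemma headedBy_eq_image_cons {k : ℕ} (hk : 1 ≤ k) (x : Fin 3) :
    headedBy (k, x) = List.cons (k, x) '' headSat (fun r => r.1 + capMat x r.2 ≤ k) := by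
  ext l
  constructor
  · rintro ⟨hl, hhead⟩
    obtain ⟨t, rfl⟩ := List.head?_eq_some_iff.mp hhead
    exact ⟨t, (CapValid.cons_iff.mp hl).2, rfl⟩
  · rintro ⟨t, ht, rfl⟩
    exact ⟨CapValid.cons_iff.mpr ⟨hk, ht⟩, rfl⟩

lemma headedBy_subset_rankLe (p : ℕ × Fin 3) : headedBy p ⊆ rankLe (rank p) := by
  rintro l ⟨hl, hhead⟩
  refine ⟨hl, (CapValid.forall_rank_le_iff hl _).mpr fun r hr => ?_⟩
  rw [hhead, Option.mem_some_iff] at hr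
  exact hr ▸ le_rfl

lemma disjoint_headedBy_rankLe {p : ℕ × Fin 3} {B : ℤ} (h : B < rank p) :
    Disjoint (headedBy p) (rankLe B) :=
  Set.disjoint_left.mpr fun _ ⟨_, hhead⟩ ⟨_, hB⟩ =>
    (hB p (List.mem_of_mem_head? hhead)).not_gt h

lemma rankLe_finite (B : ℤ) : (rankLe B).Finite := by
  have hparts : {p : ℕ × Fin 3 | rank p ≤ B}.Finite := by
    refine ((Set.finite_Iic B.toNat).prod Set.finite_univ).subset fun p hp => ⟨?_, trivial⟩
    simp only [Set.mem_ofPred_eq, rank] at hp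
    simp only [Set.mem_Iic]
    omega
  refine (hparts.finite_subsets.subset ?_).of_finite_image (f := fun l => {p | p ∈ l}) ?_
  · rintro _ ⟨l, hl, rfl⟩ p hp
    exact hl.2 p hp
  · -- the parts strictly decrease in rank, so a partition in `𝒞` is determined by its set of parts
    intro l₁ hl₁ l₂ hl₂ h
    have : Std.Irrefl (fun p r : ℕ × Fin 3 => rank r < rank p) := ⟨fun _ => lt_irrefl _⟩
    exact (CapValid.pairwise_rank_gt hl₁.1).eq_of_mem_iff (CapValid.pairwise_rank_gt hl₂.1)
      fun p => Set.ext_iff.mp h p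

lemma weight_cons (q a c d : ℂ) (k : ℕ) (x : Fin 3) (t : List (ℕ × Fin 3)) :
    weight q a c d ((k, x) :: t) = ![a, c, d] x * q ^ k * weight q a c d t := by
  fin_cases x <;> simp [weight, wt3, nc3, pow_add] <;> ring

lemma GCle_eq_tsum_rankLe (q a c d : ℂ) (m : ℤ) (x : Fin 3) :
    GCle q a c d m x = ∑' l : rankLe (3 * m + (x : ℕ)), weight q a c d l := rfl

lemma ECeq_eq_tsum_headedBy (q a c d : ℂ) (k : ℕ) (x : Fin 3) :
    ECeq q a c d k x = ∑' l : headedBy (k, x), weight q a c d l := rfl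

lemma ECeq_eq_mul_tsum_headSat (q a c d : ℂ) {k : ℕ} (hk : 1 ≤ k) (x : Fin 3) :
    ECeq q a c d k x = ![a, c, d] x * q ^ k *
      ∑' t : headSat (fun r => r.1 + capMat x r.2 ≤ k), weight q a c d t := by
  rw [ECeq_eq_tsum_headedBy, headedBy_eq_image_cons hk, tsum_image _ List.cons_injective.injOn,
    ← tsum_mul_left]
  exact tsum_congr fun t => weight_cons q a c d k x t

lemma gap_c_iff (k : ℕ) (r : ℕ × Fin 3) :
    r.1 + capMat 1 r.2 ≤ k ↔ rank r ≤ 3 * ((k : ℤ) - 1) + 1 := by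
  obtain ⟨v, y⟩ := r
  fin_cases y <;> simp [capMat, rank] <;> omega

lemma gap_a_iff (k : ℕ) (r : ℕ × Fin 3) :
    r.1 + capMat 0 r.2 ≤ k ↔ rank r ≤ 3 * ((k : ℤ) - 2) + 2 := by
  obtain ⟨v, y⟩ := r
  fin_cases y <;> simp [capMat, rank] <;> omega

lemma gap_d_iff (k : ℕ) (r : ℕ × Fin 3) :
    r.1 + capMat 2 r.2 ≤ k ↔ r = (k, 0) ∨ rank r ≤ 3 * ((k : ℤ) - 1) + 1 := by
  obtain ⟨v, y⟩ := r
  fin_cases y <;> simp [capMat, rank] <;> omega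

end Capparelli

open Capparelli

/-- Lemma 2.1 of the paper: for all `k ≥ 1`,
`E^C_{k_d} = d q^k (E^C_{k_a} + G^C_{(k-1)_c})`,
`E^C_{k_c} = c q^k G^C_{(k-1)_c}`, and
`E^C_{k_a} = a q^k G^C_{(k-2)_d}`. -/
theorem capparelli_step_recurrences (q a c d : ℂ) (k : ℕ) (hk : 1 ≤ k) :
    ECeq q a c d k 2 = d * q ^ k * (ECeq q a c d k 0 + GCle q a c d ((k : ℤ) - 1) 1) ∧
    ECeq q a c d k 1 = c * q ^ k * GCle q a c d ((k : ℤ) - 1) 1 ∧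
    ECeq q a c d k 0 = a * q ^ k * GCle q a c d ((k : ℤ) - 2) 2 := by
  have hdisj : Disjoint (headedBy (k, 0)) (rankLe (3 * ((k : ℤ) - 1) + 1)) :=
    disjoint_headedBy_rankLe (by simp only [rank, Fin.val_zero, Nat.cast_zero]; omega)
  refine ⟨?_, ?_, ?_⟩
  · rw [ECeq_eq_mul_tsum_headSat q a c d hk, headSat_congr (gap_d_iff k), headSat_or,
      ← rankLe_eq_headSat, Summable.tsum_union_disjoint hdisj
        (((rankLe_finite _).subset (headedBy_subset_rankLe _)).summable _)
        ((rankLe_finite _).summable _), ECeq_eq_tsum_headedBy, GCle_eq_tsum_rankLe]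
    rfl
  · rw [ECeq_eq_mul_tsum_headSat q a c d hk, headSat_congr (gap_c_iff k), ← rankLe_eq_headSat,
      GCle_eq_tsum_rankLe]
    rfl
  · rw [ECeq_eq_mul_tsum_headSat q a c d hk, headSat_congr (gap_a_iff k), ← rankLe_eq_headSat,
      GCle_eq_tsum_rankLe]
    rfl
end
end

section
/- As formal power series (or for |q| < 1), lim_{k→∞} ∑_{j=0}^{⌊k/2⌋} q^{binom(2j,2)}/(q;q)_{2j} = lim_{k→∞} ∑_{j=0}^{⌊k/2⌋} q^{binom(2j+1,2)}/(q;q)_{2j+1} = (-q;q)_∞; equivalently, ∑_{j≥0} q^{j(2j-1)}/(q;q)_{2j} = ∑_{j≥0} q^{j(2j+1)}/(q;q)_{2j+1} = ∏_{k≥1}(1+q^k). -/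
noncomputable section

/-!
Euler's series `S(x) = ∑ q^(n choose 2) x^n / (q;q)_n` satisfies `S(x) = (1 + x) S(xq)` and
`S(x) → 1` as `x → 0`; iterating the functional equation gives `S(q) = ∏_{k≥1} (1 + q^k)`.
It also gives `S(1) = 2 S(q)` and `S(-1) = 0`, and since the even and odd parts of `S(1)` are
`(S(1) ± S(-1)) / 2`, both halves equal `S(q)`.
-/

open Filter Finset Topology

lemma qPoch_zero (x q : ℂ) : qPoch x q 0 = 1 := prod_range_zero _

lemma qPoch_succ (x q : ℂ) (n : ℕ) : qPoch x q (n + 1) = qPoch x q n * (1 - x * q ^ n) :=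
  prod_range_succ _ n

def eulerTerm (q x : ℂ) (n : ℕ) : ℂ := q ^ n.choose 2 * x ^ n / qPoch q q n

def eulerSeries (q x : ℂ) : ℂ := ∑' n, eulerTerm q x n

lemma eulerTerm_zero (q x : ℂ) : eulerTerm q x 0 = 1 := by
  simp [eulerTerm, qPoch_zero]

lemma eulerTerm_eq_pow_mul (q x : ℂ) (n : ℕ) : eulerTerm q x n = x ^ n * eulerTerm q 1 n := by
  simp only [eulerTerm, one_pow, mul_one]
  ring

lemma pow_choose_two_succ (q : ℂ) (n : ℕ) : q ^ (n + 1).choose 2 = q ^ n * q ^ n.choose 2 := by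
  rw [Nat.choose_succ_succ, Nat.choose_one_right, pow_add]

section

variable {q : ℂ}

lemma one_sub_norm_le_norm_one_sub_pow_succ (hq : ‖q‖ ≤ 1) (n : ℕ) :
    1 - ‖q‖ ≤ ‖1 - q ^ (n + 1)‖ := by
  have hpow : ‖q ^ (n + 1)‖ ≤ ‖q‖ := by
    rw [norm_pow]
    exact pow_le_of_le_one (norm_nonneg q) hq n.succ_ne_zero
  calc 1 - ‖q‖ ≤ ‖(1 : ℂ)‖ - ‖q ^ (n + 1)‖ := by rw [norm_one]; linarith
    _ ≤ ‖1 - q ^ (n + 1)‖ := norm_sub_norm_le _ _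

lemma one_sub_pow_succ_ne_zero (hq : ‖q‖ < 1) (n : ℕ) : 1 - q ^ (n + 1) ≠ 0 :=
  norm_pos_iff.mp <| (sub_pos.mpr hq).trans_le (one_sub_norm_le_norm_one_sub_pow_succ hq.le n)

lemma qPoch_self_ne_zero (hq : ‖q‖ < 1) (n : ℕ) : qPoch q q n ≠ 0 :=
  prod_ne_zero_iff.mpr fun i _ => by
    rw [← pow_succ']
    exact one_sub_pow_succ_ne_zero hq i

lemma eulerTerm_succ (hq : ‖q‖ < 1) (x : ℂ) (n : ℕ) :
    eulerTerm q x (n + 1) = q ^ n * x / (1 - q ^ (n + 1)) * eulerTerm q x n := by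
  have := qPoch_self_ne_zero hq n
  have := one_sub_pow_succ_ne_zero hq n
  rw [eulerTerm, eulerTerm, qPoch_succ, pow_choose_two_succ, ← pow_succ']
  field_simp
  ring

/-- The coefficientwise form of `S(x) = S(xq) + x S(xq)`. -/
lemma eulerTerm_succ_eq_add (hq : ‖q‖ < 1) (x : ℂ) (n : ℕ) :
    eulerTerm q x (n + 1) = eulerTerm q (x * q) (n + 1) + x * eulerTerm q (x * q) n := by
  have := qPoch_self_ne_zero hq n
  have := one_sub_pow_succ_ne_zero hq n
  rw [eulerTerm, eulerTerm, eulerTerm, qPoch_succ, pow_choose_two_succ, ← pow_succ']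
  field_simp
  ring

lemma summable_norm_eulerTerm (hq : ‖q‖ < 1) (x : ℂ) : Summable fun n => ‖eulerTerm q x n‖ := by
  have hratio : Tendsto (fun n : ℕ => ‖q‖ ^ n * ‖x‖ / (1 - ‖q‖)) atTop (𝓝 0) := by
    simpa using ((tendsto_pow_atTop_nhds_zero_of_lt_one (norm_nonneg q) hq).mul_const ‖x‖).div_const
      (1 - ‖q‖)
  refine summable_of_ratio_norm_eventually_le (r := 1 / 2) (by norm_num) ?_
  filter_upwards [hratio.eventually_le_const (by norm_num : (0 : ℝ) < 1 / 2)] with n hn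
  rw [norm_norm, norm_norm]
  calc ‖eulerTerm q x (n + 1)‖ ≤ ‖q‖ ^ n * ‖x‖ / (1 - ‖q‖) * ‖eulerTerm q x n‖ := by
        have := sub_pos.mpr hq
        rw [eulerTerm_succ hq, norm_mul, norm_div, norm_mul, norm_pow]
        gcongr
        exact one_sub_norm_le_norm_one_sub_pow_succ hq.le n
    _ ≤ 1 / 2 * ‖eulerTerm q x n‖ := by gcongr

lemma summable_eulerTerm (hq : ‖q‖ < 1) (x : ℂ) : Summable (eulerTerm q x) :=
  (summable_norm_eulerTerm hq x).of_norm

lemma eulerSeries_eq_one_add_mul (hq : ‖q‖ < 1) (x : ℂ) :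
    eulerSeries q x = (1 + x) * eulerSeries q (x * q) := by
  have hx := summable_eulerTerm hq x
  have hxq := summable_eulerTerm hq (x * q)
  have hxq_succ : Summable fun n => eulerTerm q (x * q) (n + 1) := (summable_nat_add_iff 1).2 hxq
  have hS_xq : eulerSeries q (x * q) = 1 + ∑' n, eulerTerm q (x * q) (n + 1) := by
    rw [eulerSeries, hxq.tsum_eq_zero_add, eulerTerm_zero]
  calc eulerSeries q x = 1 + ∑' n, eulerTerm q x (n + 1) := by
        rw [eulerSeries, hx.tsum_eq_zero_add, eulerTerm_zero]
    _ = 1 + (∑' n, eulerTerm q (x * q) (n + 1) + x * eulerSeries q (x * q)) := by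
        rw [eulerSeries, ← tsum_mul_left, ← hxq_succ.tsum_add (hxq.mul_left x),
          tsum_congr (eulerTerm_succ_eq_add hq x)]
    _ = (1 + x) * eulerSeries q (x * q) := by
        rw [hS_xq]
        ring

/-- Dominated convergence, with `‖eulerTerm q 1 n‖` dominating on the closed unit ball. -/
lemma tendsto_eulerSeries_nhds_zero (hq : ‖q‖ < 1) : Tendsto (eulerSeries q) (𝓝 0) (𝓝 1) := by
  have hlim : ∑' n, eulerTerm q 0 n = 1 := by
    rw [tsum_eq_single 0 fun n hn => by rw [eulerTerm_eq_pow_mul, zero_pow hn, zero_mul],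
      eulerTerm_zero]
  rw [← hlim]
  refine tendsto_tsum_of_dominated_convergence (summable_norm_eulerTerm hq 1) (fun n => ?_) ?_
  · simpa only [← eulerTerm_eq_pow_mul] using
      ((continuous_pow n).tendsto (0 : ℂ)).mul_const (eulerTerm q 1 n)
  · filter_upwards [Metric.closedBall_mem_nhds (0 : ℂ) one_pos] with y hy n
    rw [mem_closedBall_zero_iff] at hy
    rw [eulerTerm_eq_pow_mul, norm_mul, norm_pow]
    exact mul_le_of_le_one_left (norm_nonneg _) (pow_le_one₀ (norm_nonneg y) hy)

lemma eulerSeries_self_eq_prod_mul (hq : ‖q‖ < 1) (N : ℕ) :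
    eulerSeries q q = (∏ k ∈ range N, (1 + q ^ (k + 1))) * eulerSeries q (q ^ (N + 1)) := by
  induction N with
  | zero => simp
  | succ N ih =>
    rw [ih, eulerSeries_eq_one_add_mul hq (q ^ (N + 1)), ← pow_succ, prod_range_succ]
    ring

lemma hasProd_one_add_pow_succ (hq : ‖q‖ < 1) :
    HasProd (fun k => 1 + q ^ (k + 1)) (eulerSeries q q) := by
  have hsum : Summable fun k : ℕ => q ^ (k + 1) :=
    (summable_nat_add_iff 1).mpr (summable_geometric_of_norm_lt_one hq)
  obtain ⟨P, hP⟩ := Complex.multipliable_one_add_of_summable hsum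
  have htail : Tendsto (fun N => eulerSeries q (q ^ (N + 1))) atTop (𝓝 1) :=
    (tendsto_eulerSeries_nhds_zero hq).comp
      ((tendsto_pow_atTop_nhds_zero_of_norm_lt_one hq).comp (tendsto_add_atTop_nat 1))
  have hconst : Tendsto (fun _ : ℕ => eulerSeries q q) atTop (𝓝 (P * 1)) :=
    (hP.tendsto_prod_nat.mul htail).congr fun N => (eulerSeries_self_eq_prod_mul hq N).symm
  rwa [tendsto_const_nhds_iff.mp hconst, mul_one]

lemma tsum_eulerTerm_even_and_odd (hq : ‖q‖ < 1) :
    ∑' j, eulerTerm q 1 (2 * j) = eulerSeries q q ∧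
      ∑' j, eulerTerm q 1 (2 * j + 1) = eulerSeries q q := by
  have hsum := summable_eulerTerm hq 1
  have heven : Summable fun j => eulerTerm q 1 (2 * j) :=
    hsum.comp_injective (mul_right_injective₀ two_ne_zero)
  have hodd : Summable fun j => eulerTerm q 1 (2 * j + 1) :=
    hsum.comp_injective ((add_left_injective 1).comp (mul_right_injective₀ two_ne_zero))
  have hneg (n : ℕ) : eulerTerm q (-1) n = (-1) ^ n * eulerTerm q 1 n := eulerTerm_eq_pow_mul q _ n
  have hS_one : ∑' j, eulerTerm q 1 (2 * j) + ∑' j, eulerTerm q 1 (2 * j + 1) =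
      2 * eulerSeries q q := by
    rw [tsum_even_add_odd heven hodd, ← eulerSeries, eulerSeries_eq_one_add_mul hq, one_mul]
    ring
  have hS_neg_one : ∑' j, eulerTerm q 1 (2 * j) - ∑' j, eulerTerm q 1 (2 * j + 1) = 0 := by
    have := tsum_even_add_odd (f := eulerTerm q (-1)) (by simpa [hneg, pow_mul] using heven)
      (by simpa [hneg, pow_succ, pow_mul] using hodd.neg)
    rw [← eulerSeries, eulerSeries_eq_one_add_mul hq, add_neg_cancel, zero_mul] at this
    simpa [hneg, pow_succ, pow_mul, tsum_neg, ← sub_eq_add_neg] using this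
  constructor
  · linear_combination (hS_one + hS_neg_one) / 2
  · linear_combination (hS_one - hS_neg_one) / 2

end

lemma two_mul_choose_two (j : ℕ) : (2 * j).choose 2 = j * (2 * j - 1) := by
  rw [Nat.choose_two_right]
  exact Nat.div_eq_of_eq_mul_left two_pos (by ring)

lemma two_mul_add_one_choose_two (j : ℕ) : (2 * j + 1).choose 2 = j * (2 * j + 1) := by
  rw [Nat.choose_two_right, Nat.add_sub_cancel]
  exact Nat.div_eq_of_eq_mul_left two_pos (by ring)

/-- The even- and odd-index halves of Euler's identity at `x = q`:
`∑_{j≥0} q^{j(2j-1)}/(q;q)_{2j} = ∑_{j≥0} q^{j(2j+1)}/(q;q)_{2j+1} = ∏_{k≥1}(1+q^k)`. -/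
theorem euler_identity_halves (q : ℂ) (hq : ‖q‖ < 1) :
    (∑' j : ℕ, q ^ (j * (2 * j - 1)) / qPoch q q (2 * j) = ∏' k : ℕ, (1 + q ^ (k + 1))) ∧
    (∑' j : ℕ, q ^ (j * (2 * j + 1)) / qPoch q q (2 * j + 1) =
      ∏' k : ℕ, (1 + q ^ (k + 1))) := by
  have hterm (n : ℕ) : eulerTerm q 1 n = q ^ n.choose 2 / qPoch q q n := by
    rw [eulerTerm, one_pow, mul_one]
  obtain ⟨heven, hodd⟩ := tsum_eulerTerm_even_and_odd hq
  simp only [hterm, two_mul_choose_two, two_mul_add_one_choose_two] at heven hodd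
  rw [← (hasProd_one_add_pow_succ hq).tprod_eq] at heven hodd
  exact ⟨heven, hodd⟩
end
end
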